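/- arXiv:2201.01640 — 3 statements merged into one kernel-verified Lean document; each statement's English description precedes it below -/
import Mathlib

section
/- Let G be a finite simple graph with m vertices that is a frame graph in ℝ^n (respectively, in ℂ^n), where m > n. Then G is a frame graph in ℝ^{n+1} (respectively, in ℂ^{n+1}). That is, if there is a spanning family f_1, …, f_m of ℝ^n (resp. ℂ^n) such that for all distinct i, j, ⟨f_i, f_j⟩ ≠ 0 if and only if {i,j} is an edge of G, then there is such a spanning family of ℝ^{n+1} (resp. ℂ^{n+1}). -/
open scoped ComplexOrder

/-- The minimum positive semidefinite rank of a simple graph `G` over the field `𝕜`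
(`𝕜 = ℝ` gives `mr₊^ℝ`, `𝕜 = ℂ` gives `mr₊^ℂ`): the minimum rank over all positive
semidefinite Hermitian matrices whose off-diagonal zero/nonzero pattern matches `G`. -/
noncomputable def mrPlus (𝕜 : Type) [RCLike 𝕜] {V : Type} [Fintype V] [DecidableEq V]
    (G : SimpleGraph V) : ℕ :=
  sInf {r : ℕ | ∃ A : Matrix V V 𝕜, A.PosSemidef ∧
    (∀ i j : V, i ≠ j → (A i j ≠ 0 ↔ G.Adj i j)) ∧ A.rank = r}

/-- `G` is a frame graph in the `d`-dimensional inner product space over `𝕜`: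
there is a spanning family (frame) `f` indexed by the vertices such that distinct
vertices are adjacent iff the corresponding vectors are non-orthogonal. -/
def IsFrameGraphIn (𝕜 : Type) [RCLike 𝕜] {V : Type} (G : SimpleGraph V) (d : ℕ) : Prop :=
  ∃ f : V → EuclideanSpace 𝕜 (Fin d),
    Submodule.span 𝕜 (Set.range f) = ⊤ ∧
    ∀ i j : V, i ≠ j → ((inner 𝕜 (f i) (f j) : 𝕜) ≠ 0 ↔ G.Adj i j)

/-- The strong product of two simple graphs. -/
def strongProd {α β : Type} (G : SimpleGraph α) (H : SimpleGraph β) :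
    SimpleGraph (α × β) where
  Adj x y := (x.1 = y.1 ∧ H.Adj x.2 y.2) ∨ (x.2 = y.2 ∧ G.Adj x.1 y.1) ∨
    (G.Adj x.1 y.1 ∧ H.Adj x.2 y.2)
  symm := by
    refine ⟨?_⟩
    rintro ⟨a, b⟩ ⟨c, d⟩ (⟨h1, h2⟩ | ⟨h1, h2⟩ | ⟨h1, h2⟩)
    · exact Or.inl ⟨h1.symm, h2.symm⟩
    · exact Or.inr (Or.inl ⟨h1.symm, h2.symm⟩)
    · exact Or.inr (Or.inr ⟨h1.symm, h2.symm⟩)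
  loopless := by
    refine ⟨?_⟩
    rintro ⟨a, b⟩ (⟨_, h⟩ | ⟨_, h⟩ | ⟨h, _⟩)
    · exact H.loopless.irrefl b h
    · exact G.loopless.irrefl a h
    · exact G.loopless.irrefl a h

/-- The join `G ∨ H` of two graphs with disjoint vertex sets. -/
def joinGraph {α β : Type} (G : SimpleGraph α) (H : SimpleGraph β) :
    SimpleGraph (α ⊕ β) where
  Adj x y := match x, y with
    | Sum.inl a, Sum.inl b => G.Adj a b
    | Sum.inr a, Sum.inr b => H.Adj a b
    | Sum.inl _, Sum.inr _ => True
    | Sum.inr _, Sum.inl _ => True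
  symm := by
    refine ⟨?_⟩
    rintro (a | a) (b | b) h
    · exact h.symm
    · trivial
    · trivial
    · exact h.symm
  loopless := by
    refine ⟨?_⟩
    rintro (a | a) h
    · exact G.loopless.irrefl a h
    · exact H.loopless.irrefl a h

/-- The vertex-sum `G · H` of `G` and `H`, obtained by identifying the vertex `a` of `G`
with the vertex `b` of `H` (and no other vertices or edges shared). -/
def vertexSum {α β : Type} (G : SimpleGraph α) (H : SimpleGraph β) (a : α) (b : β) :
    SimpleGraph (α ⊕ {y : β // y ≠ b}) where
  Adj x y := match x, y with
    | Sum.inl u, Sum.inl u' => G.Adj u u'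
    | Sum.inr v, Sum.inr v' => H.Adj v.1 v'.1
    | Sum.inl u, Sum.inr v => u = a ∧ H.Adj b v.1
    | Sum.inr v, Sum.inl u => u = a ∧ H.Adj b v.1
  symm := by
    refine ⟨?_⟩
    rintro (u | v) (u' | v') h
    · exact h.symm
    · exact h
    · exact h
    · exact h.symm
  loopless := by
    refine ⟨?_⟩
    rintro (u | v) h
    · exact G.loopless.irrefl u h
    · exact H.loopless.irrefl v.1 h

/-- The corona product `G ∘ H`: one copy of `G`, one copy of `H` for each vertex of `G`,
with every vertex of the `i`-th copy of `H` joined to the `i`-th vertex of `G`. -/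
def corona {α β : Type} (G : SimpleGraph α) (H : SimpleGraph β) :
    SimpleGraph (α ⊕ α × β) where
  Adj x y := match x, y with
    | Sum.inl u, Sum.inl u' => G.Adj u u'
    | Sum.inr p, Sum.inr q => p.1 = q.1 ∧ H.Adj p.2 q.2
    | Sum.inl u, Sum.inr p => u = p.1
    | Sum.inr p, Sum.inl u => u = p.1
  symm := by
    refine ⟨?_⟩
    rintro (u | p) (u' | q) h
    · exact h.symm
    · exact h
    · exact h
    · exact ⟨h.1.symm, h.2.symm⟩
  loopless := by
    refine ⟨?_⟩
    rintro (u | p) h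
    · exact G.loopless.irrefl u h
    · exact H.loopless.irrefl p.2 h.2

/-- `v : Fin m → V` is an OS-vertex set of `G`: the vertices are distinct, and for each `k`
there is `w` adjacent to `v k`, different from all `v l` with `l ≤ k`, and non-adjacent to
every `v l` (`l < k`) lying in the connected component of `v k` in the subgraph induced by
`{v 0, …, v k}`. -/
def IsOSSet {V : Type} (G : SimpleGraph V) {m : ℕ} (v : Fin m → V) : Prop :=
  Function.Injective v ∧
  ∀ k : Fin m, ∃ w : V,
    G.Adj (v k) w ∧
    (∀ l : Fin m, l ≤ k → w ≠ v l) ∧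
    ∀ l : Fin m, (hl : l < k) →
      (G.induce {x : V | ∃ l' : Fin m, l' ≤ k ∧ x = v l'}).Reachable
        ⟨v l, ⟨l, le_of_lt hl, rfl⟩⟩ ⟨v k, ⟨k, le_refl k, rfl⟩⟩ →
      ¬ G.Adj w (v l)

/-- The OS-number of `G`: the maximum cardinality of an OS-vertex set of `G`. -/
noncomputable def OSNumber {V : Type} (G : SimpleGraph V) : ℕ :=
  sSup {m : ℕ | ∃ v : Fin m → V, IsOSSet G v}

/-! A frame of `𝕜ⁿ` with more than `n` vectors is linearly dependent, so some `f i` lies in the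
span of the others. Embed `𝕜ⁿ` isometrically as the orthogonal complement of a vector `e` of
`𝕜ⁿ⁺¹` and replace `f i` by `f i + e`. Inner products of distinct vectors are unchanged, since `e`
is orthogonal to every old vector and is added to only one of them; the new family still spans,
since the redundant `f i` is recovered from the others and then gives `e`. -/

open Submodule

section Span

variable {R M V : Type*} [AddCommGroup M]

theorem exists_mem_span_image_compl_of_not_linearIndependent [DivisionRing R] [Module R M]
    {f : V → M} (h : ¬ LinearIndependent R f) : ∃ i, f i ∈ span R (f '' {i}ᶜ) := by
  simpa [linearIndependent_iff_notMem_span, Set.compl_eq_univ_sdiff] using h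

theorem span_range_add_single [DecidableEq V] [Ring R] [Module R M] {f : V → M} {i : V}
    (hi : f i ∈ span R (f '' {i}ᶜ)) (e : M) :
    span R (Set.range (f + Pi.single i e)) = span R (Set.range f) ⊔ R ∙ e := by
  set S := span R (Set.range (f + Pi.single i e))
  have hg : ∀ j, (f + Pi.single i e : V → M) j ∈ S := fun j => subset_span ⟨j, rfl⟩
  have hf_ne : ∀ j ≠ i, f j ∈ S := fun j hj => by
    simpa [Pi.single_eq_of_ne hj] using hg j
  have hf : ∀ j, f j ∈ S := by
    intro j
    rcases eq_or_ne j i with rfl | hj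
    · exact span_le.mpr (Set.image_subset_iff.mpr hf_ne) hi
    · exact hf_ne j hj
  refine le_antisymm (span_le.mpr ?_) (sup_le ?_ ?_)
  · rintro _ ⟨j, rfl⟩
    refine add_mem (mem_sup_left (subset_span ⟨j, rfl⟩)) (mem_sup_right ?_)
    rcases eq_or_ne j i with rfl | hj
    · simp [mem_span_singleton_self]
    · simp [Pi.single_eq_of_ne hj]
  · exact span_le.mpr (Set.range_subset_iff.mpr hf)
  · refine (span_singleton_le_iff_mem e S).mpr ?_
    simpa using sub_mem (hg i) (hf i)

end Span

section Inner

variable {𝕜 E V : Type*} [RCLike 𝕜] [NormedAddCommGroup E] [InnerProductSpace 𝕜 E]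
  [DecidableEq V]

theorem inner_add_single_of_ne {f : V → E} {e : E} (he : ∀ j, inner 𝕜 e (f j) = 0) (i : V)
    {j k : V} (hjk : j ≠ k) :
    inner 𝕜 ((f + Pi.single i e : V → E) j) ((f + Pi.single i e : V → E) k) =
      inner 𝕜 (f j) (f k) := by
  rcases eq_or_ne j i with rfl | hj
  · simp [Pi.single_eq_of_ne hjk.symm, inner_add_left, he]
  · have he' : inner 𝕜 (f j) e = 0 := inner_eq_zero_symm.mp (he j)
    simp [Pi.single_eq_of_ne hj, inner_add_right, Pi.single_apply, apply_ite, he']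

theorem exists_linearIsometry_range_eq_orthogonal {n : ℕ} [Fact (Module.finrank 𝕜 E = n + 1)]
    {e : E} (he : e ≠ 0) :
    ∃ ψ : EuclideanSpace 𝕜 (Fin n) →ₗᵢ[𝕜] E, LinearMap.range ψ.toLinearMap = (𝕜 ∙ e)ᗮ := by
  set b := OrthonormalBasis.fromOrthogonalSpanSingleton (𝕜 := 𝕜) n he
  refine ⟨(𝕜 ∙ e)ᗮ.subtypeₗᵢ.comp b.repr.symm.toLinearIsometry, ?_⟩
  ext x
  constructor
  · rintro ⟨y, rfl⟩
    exact (b.repr.symm y).2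
  · exact fun hx => ⟨b.repr ⟨x, hx⟩, by simp⟩

end Inner

theorem IsFrameGraphIn.succ_of_lt_card {𝕜 : Type} [RCLike 𝕜] {V : Type} [Fintype V]
    {G : SimpleGraph V} {n : ℕ} (hn : n < Fintype.card V) (h : IsFrameGraphIn 𝕜 G n) :
    IsFrameGraphIn 𝕜 G (n + 1) := by
  classical
  obtain ⟨f, hspan, hadj⟩ := h
  have hdep : ¬ LinearIndependent 𝕜 f := fun hli =>
    (hli.fintype_card_le_finrank.trans_eq finrank_euclideanSpace_fin).not_gt hn
  have : Fact (Module.finrank 𝕜 (EuclideanSpace 𝕜 (Fin (n + 1))) = n + 1) :=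
    ⟨finrank_euclideanSpace_fin⟩
  set e : EuclideanSpace 𝕜 (Fin (n + 1)) := EuclideanSpace.single 0 1
  have he : e ≠ 0 := by simp [e]
  obtain ⟨ψ, hψ⟩ := exists_linearIsometry_range_eq_orthogonal (𝕜 := 𝕜) (n := n) he
  have he_perp : ∀ j, inner 𝕜 e ((ψ ∘ f) j) = 0 := fun j =>
    mem_orthogonal_singleton_iff_inner_right.mp (hψ ▸ LinearMap.mem_range_self _ (f j))
  obtain ⟨i, hi⟩ := exists_mem_span_image_compl_of_not_linearIndependent
    (f := ψ ∘ f) fun hli => hdep (hli.of_comp ψ.toLinearMap)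
  refine ⟨ψ ∘ f + Pi.single i e, ?_, fun j k hjk => ?_⟩
  · rw [span_range_add_single hi, Set.range_comp, ← LinearIsometry.coe_toLinearMap, span_image,
      hspan, Submodule.map_top, hψ, sup_comm, sup_orthogonal_of_hasOrthogonalProjection]
  · rw [inner_add_single_of_ne he_perp i hjk]
    simpa using hadj j k hjk

/-- a graph with `m > n` vertices that is a frame graph in `ℝ^n`
(resp. `ℂ^n`) is also a frame graph in `ℝ^(n+1)` (resp. `ℂ^(n+1)`). -/
theorem isFrameGraphIn_succ_of_isFrameGraphIn (m n : ℕ) (hmn : n < m)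
    (G : SimpleGraph (Fin m)) :
    (IsFrameGraphIn ℝ G n → IsFrameGraphIn ℝ G (n + 1)) ∧
    (IsFrameGraphIn ℂ G n → IsFrameGraphIn ℂ G (n + 1)) := by
  have hcard : n < Fintype.card (Fin m) := by simpa using hmn
  exact ⟨IsFrameGraphIn.succ_of_lt_card hcard, IsFrameGraphIn.succ_of_lt_card hcard⟩
end

section
/- Let G be a connected graph on n ≥ 2 vertices and H a connected graph on m ≥ 2 vertices whose vertex sets share exactly one vertex v, and let G·H be their vertex-sum at v. Suppose G is a frame graph in a complex inner product space of dimension d exactly when n' ≤ d ≤ n, and H is a frame graph in a complex inner product space of dimension d exactly when m' ≤ d ≤ m. Then G·H is a frame graph in a complex inner product space of dimension d exactly when n' + m' ≤ d ≤ n + m − 1. Equivalently, mr_+^C(G·H) = mr_+^C(G) + mr_+^C(H). -/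
open scoped ComplexOrder

/-!
A frame graph in dimension `d` is the same thing as a positive semidefinite matrix of rank `d`
with the off-diagonal zero pattern of the graph (its Gram matrix), and the dimensions in which a
graph on `N` vertices is a frame graph form an interval ending at `N`: while the frame is linearly
dependent, a vector lying in the span of the others can be given a new orthogonal coordinate.

For the vertex sum `G · H`, frames of `G` and `H` are placed in orthogonal summands, the cut
vertex getting the sum of its two vectors; this gives dimension at most `n' + m'`. Conversely, in
a frame of `G · H` the vectors of `G - a` and of `H - b` span orthogonal subspaces `U₁` and `U₂`.
Replacing the vector of the cut vertex by its orthogonal projection onto `U₁` (resp. `U₂`) keeps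
its inner products with the vectors of that side, so `G` and `H` are frame graphs in dimensions
`dim U₁` and `dim U₂`, whose sum is at most the ambient dimension.
-/

open Module Submodule Set Function
open scoped Matrix

variable {𝕜 : Type} [RCLike 𝕜] {V : Type} {K : SimpleGraph V}

def IsFaithfulOrthRep (𝕜 : Type) [RCLike 𝕜] {E : Type*} [NormedAddCommGroup E]
    [InnerProductSpace 𝕜 E] (K : SimpleGraph V) (f : V → E) : Prop :=
  ∀ i j, i ≠ j → (inner 𝕜 (f i) (f j) ≠ 0 ↔ K.Adj i j)

namespace IsFaithfulOrthRep

variable {E : Type*} [NormedAddCommGroup E] [InnerProductSpace 𝕜 E] {f : V → E}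

theorem comp {W : Type} {φ : W → V} (hf : IsFaithfulOrthRep 𝕜 K f) (hφ : Injective φ) :
    IsFaithfulOrthRep 𝕜 (K.comap φ) (f ∘ φ) :=
  fun _ _ hij => hf _ _ (hφ.ne hij)

variable [FiniteDimensional 𝕜 E]

theorem isFrameGraphIn (hf : IsFaithfulOrthRep 𝕜 K f) :
    IsFrameGraphIn 𝕜 K (finrank 𝕜 (span 𝕜 (range f))) := by
  set U := span 𝕜 (range f)
  let e := (stdOrthonormalBasis 𝕜 U).repr
  let g : V → U := fun i => ⟨f i, subset_span (mem_range_self i)⟩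
  have hg : span 𝕜 (range g) = ⊤ := by
    rw [← span_span_coe_preimage (R := 𝕜) (s := range f)]
    congr 1
    ext x
    simp [g, Subtype.ext_iff]
  refine ⟨e ∘ g, ?_, fun i j hij => by simpa [e.inner_map_map] using hf i j hij⟩
  rw [range_comp, ← e.coe_toLinearEquiv, ← LinearEquiv.coe_toLinearMap, ← map_span, hg,
    Submodule.map_top, LinearEquiv.range]

theorem isFrameGraphIn_finrank_add_one (hf : IsFaithfulOrthRep 𝕜 K f)
    (hspan : span 𝕜 (range f) = ⊤) {i : V} (hi : f i ∈ span 𝕜 (f '' {i}ᶜ)) :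
    IsFrameGraphIn 𝕜 K (finrank 𝕜 E + 1) := by
  classical
  let ι : E →ₗ[𝕜] WithLp 2 (E × 𝕜) :=
    (WithLp.linearEquiv 2 𝕜 (E × 𝕜)).symm.toLinearMap ∘ₗ LinearMap.inl 𝕜 E 𝕜
  let e : WithLp 2 (E × 𝕜) := WithLp.toLp 2 (0, 1)
  let g : V → WithLp 2 (E × 𝕜) := fun j => ι (f j) + if j = i then e else 0
  have hg : IsFaithfulOrthRep 𝕜 K g := by
    intro j k hjk
    convert hf j k hjk using 2
    by_cases hj : j = i
    · simp [g, ι, e, hj, Ne.symm (hj ▸ hjk)]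
    · by_cases hk : k = i <;> simp [g, ι, e, hj, hk]
  set S := span 𝕜 (range g)
  have hι : ∀ x, ι x ∈ S := by
    have hf' : span 𝕜 (f '' {i}ᶜ) = ⊤ := by
      refine eq_top_iff.2 (hspan ▸ span_le.2 ?_)
      rintro - ⟨j, rfl⟩
      by_cases hj : j = i
      · exact hj ▸ hi
      · exact subset_span ⟨j, hj, rfl⟩
    have : span 𝕜 (f '' {i}ᶜ) ≤ S.comap ι := by
      rw [span_le]
      rintro - ⟨j, hj, rfl⟩
      simpa [g, show j ≠ i from hj] using subset_span (mem_range_self (f := g) j)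
    exact fun x => this (hf' ▸ mem_top)
  have he : e ∈ S := by
    simpa [g] using sub_mem (subset_span (mem_range_self (f := g) i)) (hι (f i))
  have hS : S = ⊤ := by
    refine eq_top_iff'.2 fun x => ?_
    have : x = ι x.ofLp.1 + x.ofLp.2 • e := by
      rw [WithLp.ext_iff]
      ext <;> simp [ι, e]
    exact this ▸ add_mem (hι _) (smul_mem _ _ he)
  have hdim : finrank 𝕜 (WithLp 2 (E × 𝕜)) = finrank 𝕜 E + 1 := by
    rw [(WithLp.linearEquiv 2 𝕜 (E × 𝕜)).finrank_eq, finrank_prod, finrank_self]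
  have := hg.isFrameGraphIn
  rwa [show span 𝕜 (range g) = ⊤ from hS, finrank_top, hdim] at this

theorem isFrameGraphIn_finrank_span_image_compl (hf : IsFaithfulOrthRep 𝕜 K f) (a : V) :
    IsFrameGraphIn 𝕜 K (finrank 𝕜 (span 𝕜 (f '' {a}ᶜ))) := by
  classical
  set U := span 𝕜 (f '' {a}ᶜ)
  let g := update f a (U.starProjection (f a))
  have hga : g a = U.starProjection (f a) := update_self ..
  have hgj : ∀ j ≠ a, g j = f j := fun j hj => update_of_ne hj ..
  have hmem : ∀ j ≠ a, f j ∈ U := fun j hj => subset_span ⟨j, hj, rfl⟩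
  have hproj : ∀ j ≠ a, inner 𝕜 (U.starProjection (f a)) (f j) = inner 𝕜 (f a) (f j) :=
    fun j hj => by
      rw [inner_starProjection_left_eq_right, starProjection_eq_self_iff.2 (hmem j hj)]
  have hg : IsFaithfulOrthRep 𝕜 K g := by
    intro i j hij
    by_cases hi : i = a
    · rw [hi] at hij ⊢
      rw [hga, hgj j hij.symm, hproj j hij.symm]
      exact hf a j hij
    by_cases hj : j = a
    · rw [hj] at hij ⊢
      rw [hga, hgj i hi, ← inner_conj_symm, hproj i hi, inner_conj_symm]
      exact hf i a hij
    · rw [hgj i hi, hgj j hj]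
      exact hf i j hij
  have hspan : span 𝕜 (range g) = U := by
    refine le_antisymm (span_le.2 ?_) (span_mono ?_)
    · rintro - ⟨j, rfl⟩
      by_cases hj : j = a
      · exact hj ▸ hga ▸ U.starProjection_apply_mem (f a)
      · exact hgj j hj ▸ hmem j hj
    · rintro - ⟨j, hj, rfl⟩
      exact ⟨j, hgj j hj⟩
  have := hg.isFrameGraphIn
  rwa [hspan] at this

end IsFaithfulOrthRep

namespace IsFrameGraphIn

variable {d : ℕ}

theorem le_card [Fintype V] (h : IsFrameGraphIn 𝕜 K d) : d ≤ Fintype.card V := by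
  obtain ⟨f, hspan, -⟩ := h
  have := finrank_range_le_card (R := 𝕜) f
  rwa [Set.finrank, hspan, finrank_top, finrank_euclideanSpace_fin] at this

theorem succ [Fintype V] (h : IsFrameGraphIn 𝕜 K d) (hd : d < Fintype.card V) :
    IsFrameGraphIn 𝕜 K (d + 1) := by
  obtain ⟨f, hspan, hf⟩ := h
  have hdep : ¬ LinearIndependent 𝕜 f := fun hind =>
    (hind.fintype_card_le_finrank.trans_lt (by simpa using hd)).false
  obtain ⟨i, hi⟩ : ∃ i, f i ∈ span 𝕜 (f '' {i}ᶜ) := by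
    simpa [linearIndependent_iff_notMem_span, compl_eq_univ_sdiff] using hdep
  simpa using IsFaithfulOrthRep.isFrameGraphIn_finrank_add_one hf hspan hi

theorem mono [Fintype V] {d' : ℕ} (h : IsFrameGraphIn 𝕜 K d) (hle : d ≤ d')
    (hcard : d' ≤ Fintype.card V) : IsFrameGraphIn 𝕜 K d' := by
  induction d', hle using Nat.le_induction with
  | base => exact h
  | succ k _ ih => exact (ih (by omega)).succ (by omega)

end IsFrameGraphIn

theorem Matrix.rank_gram {n E : Type*} [Fintype n] [NormedAddCommGroup E]
    [InnerProductSpace 𝕜 E] [FiniteDimensional 𝕜 E] (v : n → E) :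
    (Matrix.gram 𝕜 v).rank = finrank 𝕜 (span 𝕜 (range v)) := by
  let b := stdOrthonormalBasis 𝕜 E
  let e : E ≃ₗ[𝕜] (Fin (finrank 𝕜 E) → 𝕜) :=
    b.repr.toLinearEquiv.trans (WithLp.linearEquiv 2 𝕜 _)
  rw [Matrix.gram_eq_conjTranspose_mul b, Matrix.rank_conjTranspose_mul_self,
    Matrix.rank_eq_finrank_span_cols, ← e.finrank_map_eq, map_span, ← range_comp]
  rfl

open scoped MatrixOrder in
theorem Matrix.PosSemidef.exists_eq_gram {n : Type*} [Fintype n] {A : Matrix n n 𝕜}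
    (hA : A.PosSemidef) : ∃ v : n → EuclideanSpace 𝕜 n, A = Matrix.gram 𝕜 v := by
  classical
  obtain ⟨B, rfl⟩ := CStarAlgebra.nonneg_iff_eq_star_mul_self.mp hA.nonneg
  refine ⟨fun j => WithLp.toLp 2 (B.col j), ?_⟩
  ext i j
  simp [Matrix.mul_apply, Matrix.gram, PiLp.inner_apply, mul_comm]

theorem isFrameGraphIn_iff_exists_posSemidef [Fintype V] {d : ℕ} :
    IsFrameGraphIn 𝕜 K d ↔ ∃ A : Matrix V V 𝕜, A.PosSemidef ∧
      (∀ i j : V, i ≠ j → (A i j ≠ 0 ↔ K.Adj i j)) ∧ A.rank = d := by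
  constructor
  · rintro ⟨f, hspan, hf⟩
    refine ⟨Matrix.gram 𝕜 f, Matrix.posSemidef_gram 𝕜 f, hf, ?_⟩
    rw [Matrix.rank_gram, hspan, finrank_top, finrank_euclideanSpace_fin]
  · rintro ⟨A, hA, hpat, rfl⟩
    obtain ⟨v, rfl⟩ := hA.exists_eq_gram
    rw [Matrix.rank_gram]
    exact IsFaithfulOrthRep.isFrameGraphIn hpat

theorem exists_isFrameGraphIn [Fintype V] (K : SimpleGraph V) :
    ∃ d, IsFrameGraphIn 𝕜 K d := by
  classical
  -- `M * Mᵀ` is the signless Laplacian: degrees on the diagonal, adjacency matrix off it.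
  let M := K.incMatrix 𝕜
  have hM : Mᴴ = Mᵀ := by
    ext i j
    simp [M, SimpleGraph.incMatrix_apply, Set.indicator_apply, apply_ite]
  refine ⟨_, isFrameGraphIn_iff_exists_posSemidef.2
    ⟨M * Mᴴ, Matrix.posSemidef_self_mul_conjTranspose M, fun i j hij => ?_, rfl⟩⟩
  simp [hM, M, SimpleGraph.incMatrix_mul_transpose, hij]

theorem mrPlus_eq_sInf [Fintype V] [DecidableEq V] (K : SimpleGraph V) :
    mrPlus 𝕜 K = sInf {d | IsFrameGraphIn 𝕜 K d} := by
  simp only [mrPlus, isFrameGraphIn_iff_exists_posSemidef]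

section Interval

variable [Fintype V] {r N : ℕ}

theorem le_of_forall_isFrameGraphIn_iff (h : ∀ d, IsFrameGraphIn 𝕜 K d ↔ r ≤ d ∧ d ≤ N) :
    r ≤ N := by
  obtain ⟨d, hd⟩ := exists_isFrameGraphIn (𝕜 := 𝕜) K
  exact ((h d).1 hd).1.trans ((h d).1 hd).2

theorem mrPlus_eq_of_forall_isFrameGraphIn_iff [DecidableEq V]
    (h : ∀ d, IsFrameGraphIn 𝕜 K d ↔ r ≤ d ∧ d ≤ N) : mrPlus 𝕜 K = r := by
  have hr := le_of_forall_isFrameGraphIn_iff h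
  rw [mrPlus_eq_sInf, show {d | IsFrameGraphIn 𝕜 K d} = {d | r ≤ d ∧ d ≤ N} from Set.ext h]
  exact le_antisymm (Nat.sInf_le ⟨le_rfl, hr⟩) (le_csInf ⟨r, le_rfl, hr⟩ fun _ hd => hd.1)

end Interval

section VertexSum

variable {α β : Type} {G : SimpleGraph α} {H : SimpleGraph β} {a : α} {b : β}

@[simp]
theorem vertexSum_adj_inl_inl {i j : α} : (vertexSum G H a b).Adj (.inl i) (.inl j) ↔ G.Adj i j :=
  Iff.rfl

@[simp]
theorem vertexSum_adj_inr_inr {y z : {y : β // y ≠ b}} :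
    (vertexSum G H a b).Adj (.inr y) (.inr z) ↔ H.Adj y z :=
  Iff.rfl

@[simp]
theorem vertexSum_adj_inl_inr {i : α} {y : {y : β // y ≠ b}} :
    (vertexSum G H a b).Adj (.inl i) (.inr y) ↔ i = a ∧ H.Adj b y :=
  Iff.rfl

@[simp]
theorem vertexSum_adj_inr_inl {i : α} {y : {y : β // y ≠ b}} :
    (vertexSum G H a b).Adj (.inr y) (.inl i) ↔ i = a ∧ H.Adj b y :=
  Iff.rfl

theorem vertexSum_comap_inl : (vertexSum G H a b).comap Sum.inl = G := rfl

def vertexSumInr [DecidableEq β] (a : α) (b : β) (y : β) : α ⊕ {y : β // y ≠ b} :=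
  if hy : y = b then .inl a else .inr ⟨y, hy⟩

theorem vertexSumInr_injective [DecidableEq β] : Injective (vertexSumInr a b) := by
  intro y z h
  by_cases hy : y = b <;> by_cases hz : z = b <;> simp_all [vertexSumInr]

theorem vertexSum_comap_vertexSumInr [DecidableEq β] :
    (vertexSum G H a b).comap (vertexSumInr a b) = H := by
  ext y z
  by_cases hy : y = b <;> by_cases hz : z = b <;> simp [vertexSumInr, hy, hz, H.adj_comm b]

theorem IsFrameGraphIn.exists_add_le_of_vertexSum {d : ℕ}
    (h : IsFrameGraphIn 𝕜 (vertexSum G H a b) d) :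
    ∃ d₁ d₂, IsFrameGraphIn 𝕜 G d₁ ∧ IsFrameGraphIn 𝕜 H d₂ ∧ d₁ + d₂ ≤ d := by
  classical
  obtain ⟨f, -, hf : IsFaithfulOrthRep 𝕜 _ f⟩ := h
  have hG : IsFaithfulOrthRep 𝕜 G (f ∘ Sum.inl) := by
    simpa only [vertexSum_comap_inl] using hf.comp Sum.inl_injective
  have hH : IsFaithfulOrthRep 𝕜 H (f ∘ vertexSumInr a b) := by
    simpa only [vertexSum_comap_vertexSumInr] using hf.comp (vertexSumInr_injective (a := a))
  have hortho : span 𝕜 ((f ∘ Sum.inl) '' {a}ᶜ) ⟂ span 𝕜 ((f ∘ vertexSumInr a b) '' {b}ᶜ) := by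
    rw [isOrtho_span]
    rintro - ⟨i, hi, rfl⟩ - ⟨y, hy, rfl⟩
    have hy' : vertexSumInr a b y = .inr ⟨y, hy⟩ := dif_neg hy
    simp only [comp_apply, hy']
    by_contra hne
    exact hi ((hf _ _ Sum.inl_ne_inr).1 hne).1
  refine ⟨_, _, hG.isFrameGraphIn_finrank_span_image_compl a,
    hH.isFrameGraphIn_finrank_span_image_compl b, ?_⟩
  simpa using finrank_add_finrank_le_of_disjoint hortho.disjoint

theorem IsFaithfulOrthRep.vertexSum {E₁ E₂ : Type*} [NormedAddCommGroup E₁]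
    [InnerProductSpace 𝕜 E₁] [NormedAddCommGroup E₂] [InnerProductSpace 𝕜 E₂] [DecidableEq α]
    {f₁ : α → E₁} {f₂ : β → E₂} (hf₁ : IsFaithfulOrthRep 𝕜 G f₁) (hf₂ : IsFaithfulOrthRep 𝕜 H f₂)
    (a : α) (b : β) :
    IsFaithfulOrthRep 𝕜 (vertexSum G H a b) (Sum.elim
      (fun i => WithLp.toLp 2 (f₁ i, if i = a then f₂ b else 0))
      (fun y => WithLp.toLp 2 (0, f₂ y))) := by
  rintro (i | y) (j | z) hne
  · have hij : i ≠ j := fun h => hne (h ▸ rfl)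
    by_cases hi : i = a
    · simpa [hi, hij, Ne.symm (hi ▸ hij)] using hf₁ i j hij
    · by_cases hj : j = a <;> simpa [hi, hj] using hf₁ i j hij
  · by_cases hi : i = a
    · simpa [hi] using hf₂ b z (Ne.symm z.2)
    · simp [hi]
  · by_cases hj : j = a
    · simpa [hj, H.adj_comm] using hf₂ y b y.2
    · simp [hj]
  · have hyz : y.1 ≠ z.1 := fun h => hne (congrArg _ (Subtype.ext h))
    simpa using hf₂ y z hyz

theorem IsFrameGraphIn.exists_le_add_vertexSum {d₁ d₂ : ℕ} (h₁ : IsFrameGraphIn 𝕜 G d₁)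
    (h₂ : IsFrameGraphIn 𝕜 H d₂) (a : α) (b : β) :
    ∃ d ≤ d₁ + d₂, IsFrameGraphIn 𝕜 (vertexSum G H a b) d := by
  classical
  obtain ⟨f₁, -, hf₁ : IsFaithfulOrthRep 𝕜 G f₁⟩ := h₁
  obtain ⟨f₂, -, hf₂ : IsFaithfulOrthRep 𝕜 H f₂⟩ := h₂
  refine ⟨_, (Submodule.finrank_le _).trans_eq ?_, (hf₁.vertexSum hf₂ a b).isFrameGraphIn⟩
  rw [(WithLp.linearEquiv 2 𝕜 _).finrank_eq, finrank_prod, finrank_euclideanSpace_fin,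
    finrank_euclideanSpace_fin]

end VertexSum

theorem isFrameGraphIn_vertexSum_general (n m n' m' : ℕ)
    (G : SimpleGraph (Fin n)) (H : SimpleGraph (Fin m)) (a : Fin n) (b : Fin m)
    (hG : ∀ d : ℕ, IsFrameGraphIn ℂ G d ↔ n' ≤ d ∧ d ≤ n)
    (hH : ∀ d : ℕ, IsFrameGraphIn ℂ H d ↔ m' ≤ d ∧ d ≤ m) :
    (∀ d : ℕ, IsFrameGraphIn ℂ (vertexSum G H a b) d ↔ n' + m' ≤ d ∧ d ≤ n + m - 1) ∧
    mrPlus ℂ (vertexSum G H a b) = mrPlus ℂ G + mrPlus ℂ H := by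
  have hcard : Fintype.card (Fin n ⊕ {y : Fin m // y ≠ b}) = n + m - 1 := by
    simp only [Fintype.card_sum, Fintype.card_fin, Fintype.card_subtype_compl,
      Fintype.card_unique]
    have := b.pos
    omega
  obtain ⟨D, hD, hframe⟩ := IsFrameGraphIn.exists_le_add_vertexSum
    ((hG n').2 ⟨le_rfl, le_of_forall_isFrameGraphIn_iff hG⟩)
    ((hH m').2 ⟨le_rfl, le_of_forall_isFrameGraphIn_iff hH⟩) a b
  have hiff : ∀ d, IsFrameGraphIn ℂ (vertexSum G H a b) d ↔ n' + m' ≤ d ∧ d ≤ n + m - 1 := by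
    refine fun d => ⟨fun hd => ⟨?_, hcard ▸ hd.le_card⟩,
      fun hd => hframe.mono (hD.trans hd.1) (hcard ▸ hd.2)⟩
    obtain ⟨d₁, d₂, h₁, h₂, hle⟩ := hd.exists_add_le_of_vertexSum
    have := ((hG d₁).1 h₁).1
    have := ((hH d₂).1 h₂).1
    omega
  refine ⟨hiff, ?_⟩
  rw [mrPlus_eq_of_forall_isFrameGraphIn_iff hiff, mrPlus_eq_of_forall_isFrameGraphIn_iff hG,
    mrPlus_eq_of_forall_isFrameGraphIn_iff hH]

/-- the vertex-sum `G · H` of connected graphs is a frame graph in a complex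
space of dimension `d` exactly when `n' + m' ≤ d ≤ n + m − 1`; equivalently
`mr₊^ℂ(G · H) = mr₊^ℂ(G) + mr₊^ℂ(H)`. -/
theorem isFrameGraphIn_vertexSum (n m n' m' : ℕ) (hn : 2 ≤ n) (hm : 2 ≤ m)
    (G : SimpleGraph (Fin n)) (H : SimpleGraph (Fin m)) (a : Fin n) (b : Fin m)
    (hGc : G.Connected) (hHc : H.Connected)
    (hG : ∀ d : ℕ, IsFrameGraphIn ℂ G d ↔ n' ≤ d ∧ d ≤ n)
    (hH : ∀ d : ℕ, IsFrameGraphIn ℂ H d ↔ m' ≤ d ∧ d ≤ m) :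
    (∀ d : ℕ, IsFrameGraphIn ℂ (vertexSum G H a b) d ↔ n' + m' ≤ d ∧ d ≤ n + m - 1) ∧
    mrPlus ℂ (vertexSum G H a b) = mrPlus ℂ G + mrPlus ℂ H :=
  isFrameGraphIn_vertexSum_general n m n' m' G H a b hG hH
end

section
/- For every n ≥ 2, mr_+^R(C_3 □ P_n) = mr_+^C(C_3 □ P_n) = 3n − 3, where C_3 is the cycle on 3 vertices and P_n is the path on n vertices. -/
open scoped ComplexOrder

/-!
A matrix with the off-diagonal pattern of `G □ P_{n+1}` has rank at least `|G| n`: the only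
neighbour of `(i, k + 1)` in the layers `≤ k` is `(i, k)`, so the rows of the layers `1, …, n`
against the columns of the layers `0, …, n - 1` form a square submatrix that is block upper
triangular with invertible diagonal blocks.

Conversely, give the vertex `(i, k)` of `C₃ □ P_{n+1}` the vector `y_i ⊗ e_k + x_i ⊗ e_{k-1}` of
`𝕜³ ⊗ 𝕜ⁿ`, where `y_i`, `x_i` are the columns of `Y`, `X` and `e_m` stands for the edge
`{m, m + 1}` of the path (the first summand is absent for `k = n`, the second for `k = 0`).
Since `⟪y_i, x_j⟫ = 8 δ_ij`, vertices in different layers are non-orthogonal exactly when they are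
path-adjacent copies of the same vertex of `C₃`; within a layer, the off-diagonal products
`⟪y_i, y_j⟫ = 20`, `⟪x_i, x_j⟫ = -5` and their sum are all nonzero. So the Gram matrix, of rank at
most `3n`, has the pattern of `C₃ □ P_{n+1}`.
-/

open Matrix SimpleGraph
open scoped Kronecker

namespace Matrix

theorem det_ne_zero_of_forall_eq_zero_of_le {m α R : Type*} [Fintype m] [DecidableEq m]
    [CommRing R] [IsDomain R] [LinearOrder α] (M : Matrix m m R) (b : m → α)
    (h : ∀ i j, i ≠ j → b j ≤ b i → M i j = 0) (hd : ∀ i, M i i ≠ 0) : M.det ≠ 0 := by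
  have hM : M.BlockTriangular b := fun i j hij => h i j (fun e => hij.ne (e ▸ rfl)) hij.le
  have hblock (a : α) :
      M.toSquareBlock b a = diagonal fun x : {x // b x = a} => M x x := by
    ext x y
    by_cases hxy : x = y
    · simp [hxy, toSquareBlock_def]
    · simp [toSquareBlock_def, diagonal_apply_ne _ hxy,
        h x y (Subtype.coe_injective.ne hxy) (x.2.trans y.2.symm).ge]
  rw [hM.det, Finset.prod_ne_zero_iff]
  intro a _
  simp [hblock, Finset.prod_ne_zero_iff, hd]

theorem conjTranspose_submatrix_one_mul_submatrix_one_apply {m n R : Type*} [Fintype m]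
    [DecidableEq n] [CommSemiring R] [StarRing R] {f g : m → n} (hf : f.Injective) (k l : n) :
    (((1 : Matrix n n R).submatrix f id)ᴴ * (1 : Matrix n n R).submatrix g id) k l =
      if ∃ x, f x = k ∧ g x = l then 1 else 0 := by
  simp only [conjTranspose_submatrix, conjTranspose_one, mul_apply, submatrix_apply, one_apply,
    id_eq, mul_ite, mul_one, mul_zero]
  split_ifs with h
  · obtain ⟨x, rfl, rfl⟩ := h
    rw [Finset.sum_eq_single x] <;> grind
  · exact Finset.sum_eq_zero fun x _ => by grind

end Matrix

namespace Fin

variable {n : ℕ} {k l : Fin (n + 1)}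

theorem exists_castSucc_eq_and_castSucc_eq :
    (∃ x : Fin n, x.castSucc = k ∧ x.castSucc = l) ↔ k = l ∧ k ≠ last n := by
  constructor
  · rintro ⟨x, rfl, rfl⟩
    exact ⟨rfl, castSucc_ne_last x⟩
  · rintro ⟨rfl, h⟩
    exact ⟨k.castPred h, castSucc_castPred k h, castSucc_castPred k h⟩

theorem exists_succ_eq_and_succ_eq : (∃ x : Fin n, x.succ = k ∧ x.succ = l) ↔ k = l ∧ k ≠ 0 := by
  constructor
  · rintro ⟨x, rfl, rfl⟩
    exact ⟨rfl, succ_ne_zero x⟩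
  · rintro ⟨rfl, h⟩
    exact ⟨k.pred h, succ_pred k h, succ_pred k h⟩

theorem exists_castSucc_eq_and_succ_eq :
    (∃ x : Fin n, x.castSucc = k ∧ x.succ = l) ↔ (l : ℕ) = k + 1 := by
  constructor
  · rintro ⟨x, rfl, rfl⟩
    simp
  · intro h
    exact ⟨⟨k, by omega⟩, Fin.ext rfl, Fin.ext (by simp [h])⟩

theorem exists_succ_eq_and_castSucc_eq :
    (∃ x : Fin n, x.succ = k ∧ x.castSucc = l) ↔ (k : ℕ) = l + 1 := by
  simpa only [and_comm] using exists_castSucc_eq_and_succ_eq (k := l) (l := k)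

end Fin

theorem SimpleGraph.boxProd_pathGraph_adj_succ_castSucc {ι : Type*} (G : SimpleGraph ι) {n : ℕ}
    {i j : ι} {k l : Fin n} (hlk : l ≤ k) :
    (G □ pathGraph (n + 1)).Adj (i, k.succ) (j, l.castSucc) ↔ i = j ∧ l = k := by
  simp only [boxProd_adj, pathGraph_adj, Fin.ext_iff, Fin.val_succ, Fin.val_castSucc]
  rw [Fin.le_iff_val_le_val] at hlk
  constructor
  · rintro (⟨-, h⟩ | ⟨h | h, rfl⟩)
    all_goals first | omega | exact ⟨rfl, by omega⟩
  · rintro ⟨rfl, hkl⟩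
    exact Or.inr ⟨Or.inr (by omega), rfl⟩

theorem card_mul_le_rank_of_adj_iff_boxProd_pathGraph {ι K : Type*} [Fintype ι] [DecidableEq ι]
    [Field K] (G : SimpleGraph ι) {n : ℕ} (A : Matrix (ι × Fin (n + 1)) (ι × Fin (n + 1)) K)
    (hA : ∀ v w, v ≠ w → (A v w ≠ 0 ↔ (G □ pathGraph (n + 1)).Adj v w)) :
    Fintype.card ι * n ≤ A.rank := by
  set S := A.submatrix (fun p : ι × Fin n => (p.1, p.2.succ))
    (fun p : ι × Fin n => (p.1, p.2.castSucc))
  have hne {i j : ι} {k l : Fin n} (hlk : l ≤ k) : (i, k.succ) ≠ (j, l.castSucc) := by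
    simp only [ne_eq, Prod.ext_iff, Fin.ext_iff, Fin.val_succ, Fin.val_castSucc]
    rw [Fin.le_iff_val_le_val] at hlk
    omega
  have hS : S.det ≠ 0 := by
    refine S.det_ne_zero_of_forall_eq_zero_of_le Prod.snd ?_ ?_
    · rintro ⟨i, k⟩ ⟨j, l⟩ hij hlk
      by_contra hS
      obtain ⟨rfl, rfl⟩ := (G.boxProd_pathGraph_adj_succ_castSucc hlk).1
        ((hA (i, k.succ) (j, l.castSucc) (hne hlk)).1 hS)
      exact hij rfl
    · rintro ⟨i, k⟩
      exact (hA (i, k.succ) (i, k.castSucc) (hne le_rfl)).2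
        ((G.boxProd_pathGraph_adj_succ_castSucc le_rfl).2 ⟨rfl, rfl⟩)
  calc Fintype.card ι * n = S.rank := by
        rw [rank_of_isUnit S ((isUnit_iff_isUnit_det S).2 hS.isUnit), Fintype.card_prod,
          Fintype.card_fin]
    _ ≤ A.rank := rank_submatrix_le A _ _

section mrPlus

variable {𝕜 : Type} [RCLike 𝕜] {V : Type} [Fintype V] [DecidableEq V] {G : SimpleGraph V}

theorem mrPlus_le_rank {A : Matrix V V 𝕜} (hA : A.PosSemidef)
    (hAG : ∀ i j, i ≠ j → (A i j ≠ 0 ↔ G.Adj i j)) : mrPlus 𝕜 G ≤ A.rank :=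
  Nat.sInf_le ⟨A, hA, hAG, rfl⟩

theorem le_mrPlus {r : ℕ}
    (hG : ∃ A : Matrix V V 𝕜, A.PosSemidef ∧ ∀ i j, i ≠ j → (A i j ≠ 0 ↔ G.Adj i j))
    (h : ∀ A : Matrix V V 𝕜, A.PosSemidef → (∀ i j, i ≠ j → (A i j ≠ 0 ↔ G.Adj i j)) →
      r ≤ A.rank) :
    r ≤ mrPlus 𝕜 G := by
  obtain ⟨A, hA, hAG⟩ := hG
  refine le_csInf ⟨_, A, hA, hAG, rfl⟩ ?_
  rintro _ ⟨B, hB, hBG, rfl⟩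
  exact h B hB hBG

end mrPlus

namespace CycleThreeBoxProdPath

variable (𝕜 : Type*) [RCLike 𝕜]

def Y : Matrix (Fin 3) (Fin 3) 𝕜 := !![4, 2, 2; 2, 4, 2; 2, 2, 4]

def X : Matrix (Fin 3) (Fin 3) 𝕜 := !![3, -1, -1; -1, 3, -1; -1, -1, 3]

def factor (n : ℕ) : Matrix (Fin 3 × Fin n) (Fin 3 × Fin (n + 1)) 𝕜 :=
  Y 𝕜 ⊗ₖ (1 : Matrix (Fin (n + 1)) (Fin (n + 1)) 𝕜).submatrix Fin.castSucc id +
    X 𝕜 ⊗ₖ (1 : Matrix (Fin (n + 1)) (Fin (n + 1)) 𝕜).submatrix Fin.succ id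

variable {𝕜}

theorem conjTranspose_Y_mul_X_apply (i j : Fin 3) :
    ((Y 𝕜)ᴴ * X 𝕜) i j = if i = j then 8 else 0 := by
  fin_cases i <;> fin_cases j <;> simp [Y, X, mul_apply, Fin.sum_univ_three, map_ofNat] <;> norm_num

theorem conjTranspose_X_mul_Y_apply (i j : Fin 3) :
    ((X 𝕜)ᴴ * Y 𝕜) i j = if i = j then 8 else 0 := by
  fin_cases i <;> fin_cases j <;> simp [Y, X, mul_apply, Fin.sum_univ_three, map_ofNat] <;> norm_num

theorem conjTranspose_Y_mul_Y_apply {i j : Fin 3} (h : i ≠ j) : ((Y 𝕜)ᴴ * Y 𝕜) i j = 20 := by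
  fin_cases i <;> fin_cases j <;> simp [Y, mul_apply, Fin.sum_univ_three, map_ofNat] at h ⊢ <;>
    norm_num

theorem conjTranspose_X_mul_X_apply {i j : Fin 3} (h : i ≠ j) : ((X 𝕜)ᴴ * X 𝕜) i j = -5 := by
  fin_cases i <;> fin_cases j <;> simp [X, mul_apply, Fin.sum_univ_three, map_ofNat] at h ⊢ <;>
    norm_num

theorem conjTranspose_factor_mul_factor_apply (n : ℕ) (i j : Fin 3) (k l : Fin (n + 1)) :
    ((factor 𝕜 n)ᴴ * factor 𝕜 n) (i, k) (j, l) =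
      ((Y 𝕜)ᴴ * Y 𝕜) i j * (if k = l ∧ k ≠ Fin.last n then 1 else 0) +
      (if i = j then 8 else 0) * (if (l : ℕ) = k + 1 then 1 else 0) +
      (if i = j then 8 else 0) * (if (k : ℕ) = l + 1 then 1 else 0) +
      ((X 𝕜)ᴴ * X 𝕜) i j * (if k = l ∧ k ≠ 0 then 1 else 0) := by
  simp only [factor, conjTranspose_add, conjTranspose_kronecker, Matrix.add_mul, Matrix.mul_add,
    ← mul_kronecker_mul, Matrix.add_apply, kroneckerMap_apply,
    conjTranspose_submatrix_one_mul_submatrix_one_apply (Fin.castSucc_injective n),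
    conjTranspose_submatrix_one_mul_submatrix_one_apply (Fin.succ_injective n),
    Fin.exists_castSucc_eq_and_castSucc_eq, Fin.exists_castSucc_eq_and_succ_eq,
    Fin.exists_succ_eq_and_castSucc_eq, Fin.exists_succ_eq_and_succ_eq,
    conjTranspose_Y_mul_X_apply, conjTranspose_X_mul_Y_apply]
  ring

theorem conjTranspose_factor_mul_factor_ne_zero_iff {n : ℕ} (hn : n ≠ 0)
    {v w : Fin 3 × Fin (n + 1)} (hvw : v ≠ w) :
    ((factor 𝕜 n)ᴴ * factor 𝕜 n) v w ≠ 0 ↔ (cycleGraph 3 □ pathGraph (n + 1)).Adj v w := by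
  obtain ⟨i, k⟩ := v
  obtain ⟨j, l⟩ := w
  rw [conjTranspose_factor_mul_factor_apply, boxProd_adj, cycleGraph_three_eq_top]
  simp only [top_adj, pathGraph_adj]
  by_cases hkl : k = l
  · subst hkl
    have hij : i ≠ j := fun h => hvw (h ▸ rfl)
    have hk : k ≠ Fin.last n ∨ k ≠ 0 := by
      by_contra! h
      exact hn (by simpa [Fin.ext_iff, eq_comm] using h.1.symm.trans h.2)
    simp only [conjTranspose_Y_mul_Y_apply hij, conjTranspose_X_mul_X_apply hij, hij]
    split_ifs <;> norm_num <;> simp_all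
  · obtain rfl | hij := eq_or_ne i j
    · simp only [hkl, false_and, if_false, if_true, mul_zero, add_zero, ne_eq, not_true, and_true,
        and_false, false_or]
      split_ifs <;> norm_num <;> omega
    · simp [hij, hkl]

end CycleThreeBoxProdPath

open CycleThreeBoxProdPath in
theorem mrPlus_cycleGraph_three_boxProd_pathGraph (𝕜 : Type) [RCLike 𝕜] {n : ℕ} (hn : n ≠ 0) :
    mrPlus 𝕜 (cycleGraph 3 □ pathGraph (n + 1)) = 3 * n := by
  have hpat := fun v w (h : v ≠ w) => conjTranspose_factor_mul_factor_ne_zero_iff (𝕜 := 𝕜) hn h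
  have hpsd := posSemidef_conjTranspose_mul_self (factor 𝕜 n)
  refine le_antisymm ?_ (le_mrPlus ⟨_, hpsd, hpat⟩ fun A _ hA => ?_)
  · calc mrPlus 𝕜 _ ≤ ((factor 𝕜 n)ᴴ * factor 𝕜 n).rank := mrPlus_le_rank hpsd hpat
      _ = (factor 𝕜 n).rank := rank_conjTranspose_mul_self _
      _ ≤ 3 * n := (rank_le_card_height _).trans (by simp)
  · simpa using card_mul_le_rank_of_adj_iff_boxProd_pathGraph _ A hA

/-- `mr₊^ℝ(C₃ □ P_n) = mr₊^ℂ(C₃ □ P_n) = 3n − 3` for `n ≥ 2`. -/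
theorem mrPlus_cycleThree_boxProd_path (n : ℕ) (hn : 2 ≤ n) :
    mrPlus ℝ (SimpleGraph.cycleGraph 3 □ SimpleGraph.pathGraph n) = 3 * n - 3 ∧
    mrPlus ℂ (SimpleGraph.cycleGraph 3 □ SimpleGraph.pathGraph n) = 3 * n - 3 := by
  obtain ⟨m, rfl⟩ : ∃ m, n = m + 1 := ⟨n - 1, by omega⟩
  rw [show 3 * (m + 1) - 3 = 3 * m by omega]
  exact ⟨mrPlus_cycleGraph_three_boxProd_pathGraph ℝ (by omega),
    mrPlus_cycleGraph_three_boxProd_pathGraph ℂ (by omega)⟩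
end
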